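/- For any integers m ≥ 1 and n ≥ 1, taking S = [m] = {1,2,…,m}, the sum over all complete (m+1)-ary trees T with n internal vertices of the product over all internal vertices v of T of (x − ℍ_v^{[m]} + 1)/ℍ_v^{[m]} equals (1/(mn+1)) · C((mn+1)x, n), as an identity of polynomials in x over ℚ. -/

import Mathlib

open Polynomial Finset

/-- A complete `m`-ary tree: a `leaf` is an external vertex and a `node`
has exactly `m` linearly ordered subtrees. -/
inductive MTree (m : ℕ) : Type
  | leaf : MTree m
  | node : (Fin m → MTree m) → MTree m

namespace MTree

/-- The number of internal vertices of a complete `m`-ary tree. -/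
def internals {m : ℕ} : MTree m → ℕ
  | leaf => 0
  | node c => 1 + ∑ i, (c i).internals

/-- The first kind of hook length of the root of `node c`: one plus the number of
internal vertices of all subtrees except the rightmost one. -/
def hook1 {m : ℕ} (c : Fin m → MTree m) : ℕ :=
  1 + ∑ i ∈ Finset.univ.filter (fun i : Fin m => (i : ℕ) + 1 < m), (c i).internals

/-- The product of `f (𝓗_v)` over all internal vertices `v` of a complete `m`-ary
tree, where `𝓗_v` is the first kind of hook length. -/
def hookProd1 {m : ℕ} {R : Type*} [CommSemiring R] (f : ℕ → R) : MTree m → R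
  | leaf => 1
  | node c => f (hook1 c) * ∏ i, hookProd1 f (c i)

/-- The number of internal vertices of the `(m+1-|S|)`-ary tree `T^S` obtained from a
complete `(m+1)`-ary tree `T` by recursively deleting, for every `r ∈ S ⊆ [m]`,
the `r`-th subtree of every remaining internal vertex (the label `r ∈ {1,…,m}`
corresponds to the child with index `r - 1`, i.e. to `Fin.castSucc` of `Fin m`). -/
def internalsS {m : ℕ} (S : Finset (Fin m)) : MTree (m + 1) → ℕ
  | leaf => 0
  | node c => 1 + ∑ i ∈ (S.image Fin.castSucc)ᶜ, internalsS S (c i)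

/-- The product of `f (ℍ_v^S)` over all internal vertices `v` of a complete
`(m+1)`-ary tree, where `ℍ_v^S` is the second kind of hook length. -/
def hookProdS {m : ℕ} {R : Type*} [CommSemiring R] (S : Finset (Fin m)) (f : ℕ → R) :
    MTree (m + 1) → R
  | leaf => 1
  | node c => f (internalsS S (node c)) * ∏ i, hookProdS S f (c i)

end MTree

/-!
Along the rightmost path of a tree (the path through last children) the hook lengths
`ℍ^{[m]}` are `k, k - 1, …, 1`, so the weights `(x - h + 1)/h` on that path multiply to
`C(x, k)`, while the `m` other subtrees of each vertex on it are arbitrary trees. Writing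
`F = ∑ₙ Fₙ tⁿ` for the sums of the theorem, this says `F = ∑ₖ C(x, k) (t F^m)^k`.
The Fuss–Catalan polynomials `Aₙ(a, b) = a/(a + n b) ⬝ C(a + n b, n)` satisfy the matching
coefficient identities `∑ Aᵢ(a, b) Aⱼ(c, b) = Aₙ(a + c, b)` and
`∑ C(a, k) Aⱼ(k b + c, b) = Aₙ(a + c, b)` (sums over `i + j = n`, resp. `j + k = n`), so
strong induction on `n` gives `Fₙ = Aₙ(x, m x) = C((m n + 1) x, n)/(m n + 1)`.
Both identities are proved by induction on `n`: for fixed `b, c` each side is a polynomial in `a`,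
the induction hypothesis shows that both sides change by the same amount under `a ↦ a + 1`,
and they agree at `a = 0`.
-/

namespace Ring

variable {R : Type*} [CommRing R] [BinomialRing R]

theorem factorial_nsmul_choose_eq_prod (r : R) (n : ℕ) :
    n.factorial • choose r n = ∏ j ∈ range n, (r - j) := by
  rw [← descPochhammer_eq_factorial_smul_choose, ← aeval_eq_smeval, aeval_def,
    eval₂_eq_eval_map, descPochhammer_map, descPochhammer_eval_eq_prod_range]

theorem choose_succ_right_eq (r : R) (k : ℕ) :
    choose r (k + 1) * (k + 1) = choose r k * (r - k) := by
  have := BinomialRing.toIsAddTorsionFree (R := R)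
  rw [← nsmul_right_inj (Nat.factorial_ne_zero k), ← smul_mul_assoc, ← smul_mul_assoc,
    factorial_nsmul_choose_eq_prod, ← prod_range_succ, ← factorial_nsmul_choose_eq_prod,
    Nat.factorial_succ]
  simp only [nsmul_eq_mul]
  push_cast
  ring

theorem mul_choose_sub_one (r : R) (k : ℕ) :
    r * choose (r - 1) k = choose r (k + 1) * (k + 1) := by
  have := choose_smul_choose r (Nat.le_add_left 1 k)
  simp only [Nat.choose_one_right, Nat.add_sub_cancel, Nat.cast_one, choose_one_right] at this
  rw [← this, nsmul_eq_mul, mul_comm]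
  push_cast; ring

end Ring

theorem Polynomial.eq_of_eval_add_one_sub_eq {R : Type*} [CommRing R] [IsDomain R] [CharZero R]
    {p q : R[X]} (h₀ : p.eval 0 = q.eval 0)
    (h : ∀ a, p.eval (a + 1) - p.eval a = q.eval (a + 1) - q.eval a) : p = q := by
  rw [← sub_eq_zero]
  have hroot : ∀ n : ℕ, (p - q).IsRoot n := by
    intro n
    induction n with
    | zero => simp [h₀]
    | succ n ih =>
      have := h n
      simp only [IsRoot, eval_sub, Nat.cast_succ] at ih ⊢
      linear_combination ih + this
  exact eq_zero_of_infinite_isRoot _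
    (Set.infinite_of_injective_forall_mem Nat.cast_injective hroot)

section FussCatalan

open Ring

variable {R : Type*} [CommRing R] [BinomialRing R]

/-- `Aₙ(a, b) = a/(a + n b) ⬝ C(a + n b, n)`, written without division
(see `mul_fussCatalan`). -/
noncomputable def fussCatalan (a b : R) : ℕ → R
  | 0 => 1
  | n + 1 => choose (a + (n + 1) * b) (n + 1) - b * choose (a + (n + 1) * b - 1) n

@[simp] theorem fussCatalan_zero (a b : R) : fussCatalan a b 0 = 1 := rfl

theorem fussCatalan_succ (a b : R) (n : ℕ) : fussCatalan a b (n + 1) =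
    choose (a + (n + 1) * b) (n + 1) - b * choose (a + (n + 1) * b - 1) n := rfl

theorem fussCatalan_add_one_left (a b : R) (n : ℕ) :
    fussCatalan (a + 1) b (n + 1) = fussCatalan a b (n + 1) + fussCatalan (a + b) b n := by
  cases n with
  | zero => simp [fussCatalan_succ]
  | succ n =>
    set y := a + (n + 2) * b
    have e₁ : a + 1 + ((n + 1 : ℕ) + 1) * b = y + 1 := by push_cast; ring
    have e₂ : a + ((n + 1 : ℕ) + 1) * b = y := by push_cast; ring
    have e₃ : a + b + ((n : ℕ) + 1) * b = y := by ring
    have h₂ := choose_succ_succ (y - 1) n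
    rw [sub_add_cancel] at h₂
    simp only [fussCatalan_succ, e₁, e₂, e₃, add_sub_cancel_right]
    linear_combination choose_succ_succ y (n + 1) - b * h₂

theorem fussCatalan_zero_left (b : R) (n : ℕ) : fussCatalan 0 b (n + 1) = 0 := by
  have := BinomialRing.toIsAddTorsionFree (R := R)
  have h := mul_choose_sub_one ((n + 1) * b) n
  rw [← nsmul_right_inj n.succ_ne_zero, smul_zero, fussCatalan_succ, nsmul_eq_mul, zero_add]
  push_cast
  linear_combination -h

theorem mul_fussCatalan (a b : R) (n : ℕ) :
    (a + n * b) * fussCatalan a b n = a * choose (a + n * b) n := by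
  cases n with
  | zero => simp
  | succ n =>
    have h := mul_choose_sub_one (a + (n + 1) * b) n
    rw [fussCatalan_succ]
    push_cast
    linear_combination (-b) * h

theorem map_fussCatalan {S : Type*} [CommRing S] [BinomialRing S] (f : R →+* S) (a b : R)
    (n : ℕ) :
    f (fussCatalan a b n) = fussCatalan (f a) (f b) n := by
  cases n <;> simp [fussCatalan_succ, map_choose]

end FussCatalan

section PolynomialIdentities

open Ring

variable {R : Type*} [CommRing R] [Module ℚ≥0 R]

@[simp] theorem Polynomial.eval_fussCatalan (p q : R[X]) (a : R) (n : ℕ) :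
    (fussCatalan p q n).eval a = fussCatalan (p.eval a) (q.eval a) n :=
  map_fussCatalan (evalRingHom a) p q n

@[simp] theorem Polynomial.eval_choose (p : R[X]) (a : R) (n : ℕ) :
    (choose p n).eval a = choose (p.eval a) n :=
  map_choose (evalRingHom a) p n

variable [IsDomain R] [CharZero R]

theorem sum_antidiagonal_fussCatalan_mul (a b c : R) (n : ℕ) :
    ∑ p ∈ antidiagonal n, fussCatalan a b p.1 * fussCatalan c b p.2 =
      fussCatalan (a + c) b n := by
  induction n generalizing a c with
  | zero => simp
  | succ n ih =>
    have key : ∑ p ∈ antidiagonal (n + 1),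
        fussCatalan X (C b) p.1 * fussCatalan (C c) (C b) p.2 =
          fussCatalan (X + C c) (C b) (n + 1) := by
      refine Polynomial.eq_of_eval_add_one_sub_eq ?_ fun a => ?_
      · simp [Nat.sum_antidiagonal_succ, eval_finsetSum, fussCatalan_zero_left]
      · have shift :
            ∑ p ∈ antidiagonal (n + 1), fussCatalan (a + 1) b p.1 * fussCatalan c b p.2 =
              ∑ p ∈ antidiagonal (n + 1), fussCatalan a b p.1 * fussCatalan c b p.2 +
              ∑ p ∈ antidiagonal n, fussCatalan (a + b) b p.1 * fussCatalan c b p.2 := by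
          simp only [Nat.sum_antidiagonal_succ, fussCatalan_add_one_left, fussCatalan_zero,
            add_mul, sum_add_distrib]
          ring
        simp only [eval_finsetSum, eval_mul, eval_fussCatalan, eval_add, eval_X, eval_C]
        rw [shift, ih, add_right_comm a 1 c, fussCatalan_add_one_left, add_right_comm a b c]
        ring
    simpa [eval_finsetSum] using congrArg (eval a) key

theorem sum_antidiagonal_choose_mul_fussCatalan (a b c : R) (n : ℕ) :
    ∑ p ∈ antidiagonal n, choose a p.2 * fussCatalan (p.2 * b + c) b p.1 =
      fussCatalan (a + c) b n := by
  induction n generalizing a c with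
  | zero => simp
  | succ n ih =>
    have key : ∑ p ∈ antidiagonal (n + 1),
        choose (X : R[X]) p.2 * fussCatalan (p.2 * C b + C c) (C b) p.1 =
        fussCatalan (X + C c) (C b) (n + 1) := by
      refine Polynomial.eq_of_eval_add_one_sub_eq ?_ fun a => ?_
      · simp [Nat.sum_antidiagonal_succ', eval_finsetSum]
      · have e : ∀ k : ℕ, ((k + 1 : ℕ) : R) * b + c = k * b + (b + c) := by
          intro k; push_cast; ring
        have shift :
            ∑ p ∈ antidiagonal (n + 1), choose (a + 1) p.2 * fussCatalan (p.2 * b + c) b p.1 =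
              ∑ p ∈ antidiagonal (n + 1), choose a p.2 * fussCatalan (p.2 * b + c) b p.1 +
              ∑ p ∈ antidiagonal n, choose a p.2 * fussCatalan (p.2 * b + (b + c)) b p.1 := by
          simp only [Nat.sum_antidiagonal_succ', choose_succ_succ, choose_zero_right, e,
            add_mul, sum_add_distrib]
          ring
        simp only [eval_finsetSum, eval_mul, eval_fussCatalan, eval_choose, eval_add, eval_mul,
          eval_natCast, eval_X, eval_C]
        rw [shift, ih, add_right_comm a 1 c, fussCatalan_add_one_left, ← add_assoc,
          add_right_comm a b c]
        ring
    simpa [eval_finsetSum] using congrArg (eval a) key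

end PolynomialIdentities

theorem Finset.Nat.sum_antidiagonal_add_eq_shift {M : Type*} [AddCommMonoid M]
    (f : ℕ × ℕ → M) (j k : ℕ) (h : ∀ p ∈ antidiagonal (j + k), p.2 < k → f p = 0) :
    ∑ p ∈ antidiagonal (j + k), f p = ∑ q ∈ antidiagonal j, f (q.1, q.2 + k) := by
  rw [← sum_filter_of_ne fun p hp hne => not_lt.mp fun hlt => hne (h p hp hlt),
    Nat.antidiagonal_filter_le_snd_of_le (Nat.le_add_left k j), sum_map, Nat.add_sub_cancel]
  rfl

namespace MTree

section Enumeration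

variable {N : ℕ}

theorem finite_setOf_internals_le (n : ℕ) : {T : MTree N | T.internals ≤ n}.Finite := by
  induction n with
  | zero =>
    refine (Set.finite_singleton leaf).subset fun T hT => ?_
    cases T with
    | leaf => rfl
    | node c => simp [internals] at hT
  | succ n ih =>
    refine (((Set.Finite.pi fun _ : Fin N => ih).image node).insert leaf).subset fun T hT => ?_
    cases T with
    | leaf => exact Set.mem_insert _ _
    | node c =>
      refine Set.mem_insert_of_mem _ ⟨c, fun i _ => ?_, rfl⟩
      have := single_le_sum (fun j _ => Nat.zero_le (c j).internals) (mem_univ i)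
      simp only [internals, Set.mem_ofPred_eq] at hT ⊢
      omega

theorem finite_setOf_sum_internals_eq (r n : ℕ) :
    {c : Fin r → MTree N | ∑ i, (c i).internals = n}.Finite := by
  refine (Set.Finite.pi fun _ : Fin r => finite_setOf_internals_le (N := N) n).subset
    fun c hc i _ => ?_
  have := single_le_sum (fun j _ => Nat.zero_le (c j).internals) (mem_univ i)
  simp only [Set.mem_ofPred_eq] at hc ⊢
  omega

noncomputable def tuples (N r n : ℕ) : Finset (Fin r → MTree N) :=
  (finite_setOf_sum_internals_eq r n).toFinset

noncomputable def trees (N n : ℕ) : Finset (MTree N) :=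
  ((finite_setOf_internals_le n).subset fun _ (h : _ = n) => h.le).toFinset

@[simp] theorem mem_tuples {r n : ℕ} {c : Fin r → MTree N} :
    c ∈ tuples N r n ↔ ∑ i, (c i).internals = n :=
  Set.Finite.mem_toFinset _

@[simp] theorem mem_trees {n : ℕ} {T : MTree N} : T ∈ trees N n ↔ T.internals = n :=
  Set.Finite.mem_toFinset _

theorem coe_trees (n : ℕ) : (trees N n : Set (MTree N)) = {T | T.internals = n} :=
  Set.Finite.coe_toFinset _

theorem trees_zero : trees N 0 = {leaf} := by
  ext (_ | c) <;> simp [internals]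

@[simps]
def nodeEmbedding (N : ℕ) : (Fin N → MTree N) ↪ MTree N := ⟨node, fun _ _ h => node.inj h⟩

theorem trees_succ (n : ℕ) : trees N (n + 1) = (tuples N N n).map (nodeEmbedding N) := by
  ext (_ | c) <;> simp [internals]
  omega

theorem tuples_zero (n : ℕ) : tuples N 0 n = if n = 0 then {Fin.elim0} else ∅ := by
  split_ifs with h <;> ext c <;> simp [h, Subsingleton.elim c Fin.elim0]
  omega

variable {M : Type*} [CommSemiring M]

theorem sum_trees_succ (f : MTree N → M) (n : ℕ) :
    ∑ T ∈ trees N (n + 1), f T = ∑ c ∈ tuples N N n, f (node c) := by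
  rw [trees_succ, sum_map]; rfl

theorem sum_tuples_succ (g h : MTree N → M) (r n : ℕ) :
    ∑ c ∈ tuples N (r + 1) n, (∏ i : Fin r, g (c i.castSucc)) * h (c (Fin.last r)) =
      ∑ p ∈ antidiagonal n,
        (∑ c ∈ tuples N r p.1, ∏ i, g (c i)) * ∑ T ∈ trees N p.2, h T := by
  simp_rw [sum_mul_sum, ← sum_product']
  rw [sum_sigma']
  refine sum_nbij'
    (fun c => ⟨(∑ i : Fin r, (c i.castSucc).internals, (c (Fin.last r)).internals),
      (Fin.init c, c (Fin.last r))⟩)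
    (fun x => Fin.snoc x.2.1 x.2.2) ?_ ?_ ?_ ?_ ?_
  · intro c hc
    simp_all [Fin.sum_univ_castSucc]
    rfl
  · rintro ⟨p, c, T⟩ hx
    simp_all [Fin.sum_univ_castSucc]
  · intro c _
    exact Fin.snoc_init_self c
  · rintro ⟨p, c, T⟩ hx
    simp_all
  · intro c _
    rfl

end Enumeration

variable {m : ℕ}

theorem internalsS_le_internals (S : Finset (Fin m)) (T : MTree (m + 1)) :
    internalsS S T ≤ T.internals := by
  induction T with
  | leaf => exact le_rfl
  | node c ih =>
    simp only [internalsS, internals, add_le_add_iff_left]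
    exact (sum_le_sum fun i _ => ih i).trans (sum_le_sum_of_subset (subset_univ _))

theorem internalsS_univ_node (c : Fin (m + 1) → MTree (m + 1)) :
    internalsS univ (node c) = 1 + internalsS univ (c (Fin.last m)) := by
  have : ((univ : Finset (Fin m)).image Fin.castSucc)ᶜ = {Fin.last m} := by
    ext i
    simp
  rw [internalsS, this, sum_singleton]

section HookSums

variable {R : Type*} [CommSemiring R] (m) (f : ℕ → R)

noncomputable def treeSum (n : ℕ) : R :=
  ∑ T ∈ trees (m + 1) n, hookProdS univ f T

noncomputable def forestSum (r n : ℕ) : R :=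
  ∑ c ∈ tuples (m + 1) r n, ∏ i, hookProdS univ f (c i)

noncomputable def chainSum (n k : ℕ) : R :=
  ∑ T ∈ trees (m + 1) n with internalsS univ T = k, hookProdS univ f T

theorem forestSum_zero (n : ℕ) : forestSum m f 0 n = if n = 0 then 1 else 0 := by
  rw [forestSum, tuples_zero]
  split_ifs <;> simp

theorem forestSum_succ (r n : ℕ) :
    forestSum m f (r + 1) n = ∑ p ∈ antidiagonal n, forestSum m f r p.1 * treeSum m f p.2 := by
  simp_rw [forestSum, Fin.prod_univ_castSucc, sum_tuples_succ]
  rfl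

theorem chainSum_zero (n : ℕ) : chainSum m f n 0 = if n = 0 then 1 else 0 := by
  cases n with
  | zero => simp [chainSum, trees_zero, filter_singleton, internalsS, hookProdS]
  | succ n => simp [chainSum, sum_filter, sum_trees_succ, internalsS_univ_node]

theorem chainSum_eq_zero_of_lt {n k : ℕ} (h : n < k) : chainSum m f n k = 0 := by
  refine sum_eq_zero fun T hT => absurd (internalsS_le_internals univ T) ?_
  rw [mem_filter, mem_trees] at hT
  omega

theorem chainSum_succ_succ (n k : ℕ) :
    chainSum m f (n + 1) (k + 1) =
      f (k + 1) * ∑ p ∈ antidiagonal n, forestSum m f m p.1 * chainSum m f p.2 k := by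
  have root : ∀ c : Fin (m + 1) → MTree (m + 1),
      (if internalsS univ (node c) = k + 1 then hookProdS univ f (node c) else 0) =
        f (k + 1) * ((∏ i : Fin m, hookProdS univ f (c i.castSucc)) *
          if internalsS univ (c (Fin.last m)) = k then hookProdS univ f (c (Fin.last m))
          else 0) := by
    intro c
    simp only [hookProdS, internalsS_univ_node, Fin.prod_univ_castSucc]
    split_ifs with h₁ h₂ h₂
    · rw [h₂, add_comm]
    · omega
    · omega
    · simp
  simp_rw [chainSum, sum_filter, sum_trees_succ, root, ← mul_sum]
  rw [sum_tuples_succ (hookProdS univ f)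
    (fun T => if internalsS univ T = k then hookProdS univ f T else 0)]
  rfl

theorem treeSum_eq_sum_chainSum (n : ℕ) :
    treeSum m f n = ∑ p ∈ antidiagonal n, chainSum m f n p.2 := by
  rw [← Nat.sum_antidiagonal_swap]
  simp only [Prod.snd_swap]
  rw [Nat.sum_antidiagonal_eq_sum_range_succ fun k _ => chainSum m f n k, treeSum]
  refine (sum_fiberwise_of_maps_to (fun T hT => ?_) _).symm
  rw [mem_trees] at hT
  exact mem_range.mpr (Nat.lt_succ_of_le (hT ▸ internalsS_le_internals univ T))

end HookSums

section Solution

open Ring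

variable {R : Type*} [CommRing R] [IsDomain R] [CharZero R] [Module ℚ≥0 R]
  (m) {f : ℕ → R} {x : R}

theorem forestSum_eq_fussCatalan {N : ℕ}
    (hF : ∀ t < N, treeSum m f t = fussCatalan x (m * x) t) (r : ℕ) {s : ℕ} (hs : s < N) :
    forestSum m f r s = fussCatalan (r * x) (m * x) s := by
  induction r generalizing s with
  | zero => cases s <;> simp [forestSum_zero, fussCatalan_zero_left]
  | succ r ih =>
    rw [forestSum_succ, Nat.cast_succ, add_one_mul, ← sum_antidiagonal_fussCatalan_mul]
    refine sum_congr rfl fun p hp => ?_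
    have := mem_antidiagonal.mp hp
    rw [ih (by omega), hF p.2 (by omega)]

theorem chainSum_add_eq {N : ℕ}
    (hH : ∀ s < N, forestSum m f m s = fussCatalan (m * x) (m * x) s)
    (hf : ∀ k, f (k + 1) * choose x k = choose x (k + 1)) (k : ℕ) {j : ℕ} (hj : j + k ≤ N) :
    chainSum m f (j + k) k = choose x k * fussCatalan (k * (m * x)) (m * x) j := by
  induction k generalizing j with
  | zero => cases j <;> simp [chainSum_zero, fussCatalan_zero_left]
  | succ k ih =>
    rw [← add_assoc, chainSum_succ_succ, Nat.sum_antidiagonal_add_eq_shift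
      (fun p => forestSum m f m p.1 * chainSum m f p.2 k) j k
      fun p _ hp => by rw [chainSum_eq_zero_of_lt m f hp, mul_zero]]
    calc f (k + 1) * ∑ q ∈ antidiagonal j, forestSum m f m q.1 * chainSum m f (q.2 + k) k
        = f (k + 1) * choose x k * ∑ q ∈ antidiagonal j,
            fussCatalan (m * x) (m * x) q.1 * fussCatalan (k * (m * x)) (m * x) q.2 := by
          rw [mul_assoc]
          congr 1
          rw [mul_sum]
          refine sum_congr rfl fun q hq => ?_
          have := mem_antidiagonal.mp hq
          rw [hH q.1 (by omega), ih (by omega)]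
          ring
      _ = choose x (k + 1) * fussCatalan ((k + 1 : ℕ) * (m * x)) (m * x) j := by
          rw [hf, sum_antidiagonal_fussCatalan_mul]
          push_cast
          ring_nf

theorem treeSum_eq_fussCatalan (hf : ∀ k, f (k + 1) * choose x k = choose x (k + 1)) (n : ℕ) :
    treeSum m f n = fussCatalan x (m * x) n := by
  induction n using Nat.strong_induction_on with
  | _ n ih =>
    have hG := chainSum_add_eq m
      (fun s hs => forestSum_eq_fussCatalan m ih m hs) hf (N := n)
    have W := sum_antidiagonal_choose_mul_fussCatalan x (m * x) 0 n
    rw [add_zero] at W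
    rw [treeSum_eq_sum_chainSum, ← W]
    refine sum_congr rfl fun p hp => ?_
    rw [← mem_antidiagonal.mp hp, hG p.2 (mem_antidiagonal.mp hp).le, add_zero]

end Solution

end MTree

noncomputable def hookWeight (h : ℕ) : ℚ[X] := C ((h : ℚ)⁻¹) * (X - C ((h : ℚ) - 1))

theorem hookWeight_succ_mul_choose (k : ℕ) :
    hookWeight (k + 1) * Ring.choose (X : ℚ[X]) k = Ring.choose (X : ℚ[X]) (k + 1) := by
  have h := Ring.choose_succ_right_eq (X : ℚ[X]) k
  have hk : ((k : ℚ) + 1) ≠ 0 := by positivity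
  calc _ = C ((k : ℚ) + 1)⁻¹ * (Ring.choose (X : ℚ[X]) k * (X - (k : ℚ[X]))) := by
        simp [hookWeight]; ring
    _ = Ring.choose (X : ℚ[X]) (k + 1) * (C ((k : ℚ) + 1)⁻¹ * C ((k : ℚ) + 1)) := by
      rw [← h]; simp; ring
    _ = Ring.choose (X : ℚ[X]) (k + 1) := by
      rw [← map_mul, inv_mul_cancel₀ hk, map_one, mul_one]

theorem fussCatalan_X_natCast_mul_X (m n : ℕ) :
    fussCatalan (X : ℚ[X]) ((m : ℚ[X]) * X) n =
      C (((m : ℚ) * n + 1)⁻¹ * (n.factorial : ℚ)⁻¹) *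
        ∏ j ∈ range n, (C ((m : ℚ) * n + 1) * X - C (j : ℚ)) := by
  set q : ℚ := m * n + 1
  have hq : q ≠ 0 := by positivity
  have h := mul_fussCatalan (X : ℚ[X]) ((m : ℚ[X]) * X) n
  rw [show (X : ℚ[X]) + (n : ℚ[X]) * ((m : ℚ[X]) * X) = C q * X by simp [q]; ring] at h
  have hA : C q * fussCatalan (X : ℚ[X]) ((m : ℚ[X]) * X) n = Ring.choose (C q * X) n :=
    mul_left_cancel₀ X_ne_zero (by linear_combination h)
  have hprod : ∏ j ∈ range n, (C q * X - C (j : ℚ)) =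
      C (n.factorial : ℚ) * Ring.choose (C q * X) n := by
    rw [map_natCast C, ← nsmul_eq_mul, Ring.factorial_nsmul_choose_eq_prod]
    simp
  rw [hprod, ← hA, ← mul_assoc, ← mul_assoc, ← map_mul, ← map_mul,
    show q⁻¹ * (n.factorial : ℚ)⁻¹ * n.factorial * q = 1 by field_simp, map_one, one_mul]

theorem hook_length_second_kind_corollary₃_general (m n : ℕ) :
    (∑ᶠ T ∈ {T : MTree (m + 1) | T.internals = n},
        MTree.hookProdS (Finset.univ : Finset (Fin m)) (fun h =>
          C ((h : ℚ)⁻¹) * ((X : ℚ[X]) - C ((h : ℚ) - 1))) T)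
      = C (((m : ℚ) * n + 1)⁻¹ * (n.factorial : ℚ)⁻¹) *
          ∏ j ∈ Finset.range n,
            (C ((m : ℚ) * n + 1) * (X : ℚ[X]) - C (j : ℚ)) := by
  rw [← MTree.coe_trees, finsum_mem_coe_finset, ← fussCatalan_X_natCast_mul_X]
  exact MTree.treeSum_eq_fussCatalan m hookWeight_succ_mul_choose n

/-- **Corollary (S = [m] in Theorem 1.2).**  For `m ≥ 1` and `n ≥ 1`, taking
`S = [m]` (that is, `S = Finset.univ`, so `s = m`),
`∑_{T ∈ 𝒯_{n,m+1}} ∏_{v ∈ 𝓘(T)} (x - ℍ_v^{[m]} + 1)/ℍ_v^{[m]}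
  = (1/(mn+1)) ⬝ C((mn+1)x, n)` in `ℚ[x]`, where
`C(y,n) = y(y-1)⋯(y-n+1)/n!`. -/
theorem hook_length_second_kind_corollary₃ (m n : ℕ) (hm : 1 ≤ m) (hn : 1 ≤ n) :
    (∑ᶠ T ∈ {T : MTree (m + 1) | T.internals = n},
        MTree.hookProdS (Finset.univ : Finset (Fin m)) (fun h =>
          C ((h : ℚ)⁻¹) * ((X : ℚ[X]) - C ((h : ℚ) - 1))) T)
      = C (((m : ℚ) * n + 1)⁻¹ * (n.factorial : ℚ)⁻¹) *
          ∏ j ∈ Finset.range n,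
            (C ((m : ℚ) * n + 1) * (X : ℚ[X]) - C (j : ℚ)) :=
  hook_length_second_kind_corollary₃_general m n
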